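/- arXiv:2203.10120 — 3 statements merged into one kernel-verified Lean document; each statement's English description precedes it below -/
import Mathlib

section
/- If every vertex of a finite nonempty multigraph has degree at least t+1, and between any two distinct vertices there are at most b parallel edges (b ≥ 1), then the number of edges is at least (1/2)·(1 + ⌈(t+1)/b⌉)·(t+1). -/
/-! A vertex `v` has degree at least `t + 1`, and each of its neighbours accounts for at most `b`
of it, so `v` has at least `⌈(t + 1) / b⌉` neighbours. Together with `v` itself (no loops) this
gives at least `1 + ⌈(t + 1) / b⌉` vertices, each of degree at least `t + 1`. -/

open Finset

lemma Finset.sum_le_mul_card_filter_ne_zero {ι : Type*} [Fintype ι] (f : ι → ℕ) {b : ℕ}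
    (hf : ∀ i, f i ≤ b) : ∑ i, f i ≤ b * #{i | f i ≠ 0} := by
  rw [← sum_filter_ne_zero, mul_comm, ← smul_eq_mul]
  exact sum_le_card_nsmul _ _ _ fun i _ ↦ hf i

lemma Nat.add_div_le_of_succ_le_mul {t b n : ℕ} (hb : 1 ≤ b) (h : t + 1 ≤ b * n) :
    (t + b) / b ≤ n := by
  rw [Nat.div_le_iff_le_mul_add_pred hb]
  omega

/-- `(t + b) / b = ⌈(t + 1) / b⌉`, and the double sum counts every edge twice. -/
theorem stmt_2_general {V : Type*} [Fintype V] [Nonempty V]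
    (mult : V → V → ℕ) (t b : ℕ) (hb : 1 ≤ b)
    (hloopless : ∀ v : V, mult v v = 0)
    (hmult : ∀ v w : V, mult v w ≤ b)
    (hdeg : ∀ v : V, t + 1 ≤ ∑ w : V, mult v w) :
    (1 + (t + b) / b) * (t + 1) ≤ ∑ v : V, ∑ w : V, mult v w := by
  obtain ⟨v⟩ := ‹Nonempty V›
  have hneighbours : (t + b) / b ≤ #{w | mult v w ≠ 0} :=
    Nat.add_div_le_of_succ_le_mul hb
      ((hdeg v).trans (sum_le_mul_card_filter_ne_zero _ (hmult v)))
  have hv : v ∉ ({w | mult v w ≠ 0} : Finset V) := by simp [hloopless]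
  have hcard : 1 + (t + b) / b ≤ Fintype.card V := by
    have := card_lt_univ_of_notMem hv
    omega
  calc (1 + (t + b) / b) * (t + 1) ≤ Fintype.card V * (t + 1) := Nat.mul_le_mul_right _ hcard
    _ = #(univ : Finset V) • (t + 1) := by rw [card_univ, smul_eq_mul]
    _ ≤ ∑ v : V, ∑ w : V, mult v w := card_nsmul_le_sum _ _ _ fun v _ ↦ hdeg v

/-- A finite loopless multigraph given by a symmetric multiplicity function `mult`.
`∑ v, ∑ w, mult v w` counts each edge twice (handshaking), so the conclusion
`(1 + ⌈(t+1)/b⌉) * (t+1) ≤ ∑ v, ∑ w, mult v w` says that the number of edges is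
at least `(1/2) * (1 + ⌈(t+1)/b⌉) * (t+1)`.  Here `(t + b) / b = ⌈(t+1)/b⌉`. -/
theorem stmt_2 {V : Type*} [Fintype V] [DecidableEq V] [Nonempty V]
    (mult : V → V → ℕ) (t b : ℕ) (hb : 1 ≤ b)
    (hsymm : ∀ v w : V, mult v w = mult w v)
    (hloopless : ∀ v : V, mult v v = 0)
    (hmult : ∀ v w : V, mult v w ≤ b)
    (hdeg : ∀ v : V, t + 1 ≤ ∑ w : V, mult v w) :
    (1 + (t + b) / b) * (t + 1) ≤ ∑ v : V, ∑ w : V, mult v w :=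
  stmt_2_general mult t b hb hloopless hmult hdeg
end

section
/- In the graph on ℕ where i ~ j iff δ ≤ |i - j| ≤ δ + m - 1 (with m, δ, t positive integers), the number of (t+2)-cliques containing a fixed vertex v as their minimum element equals the number of (t+1)-element subsets {i_1 < … < i_{t+1}} of {v+δ, …, v+δ+m-1} with i_{j} - i_{j-1} ≥ δ for all j (setting i_0 = v), and this number equals C(m - t(δ-1), t+1) = C(m - tδ + t, t+1) when m - tδ + t ≥ t+1, and 0 otherwise. -/
/-!
A clique with minimum `v` is `v` together with a set of points of the window `[v + δ, v + δ + m)`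
whose consecutive gaps are at least `δ`; two points of the window are automatically within
`δ + m - 1` of each other. Writing `δ = g + 1`, the number of `k`-subsets of an interval of length
`n` with all gaps at least `g + 1` satisfies Pascal's recurrence
`f (n + 1) (k + 1) = f n (k + 1) + f (n - g) k`, according to whether the top point is used, and
so equals `C(n - (k - 1) g, k)`.
-/

open Finset

def HasGapsAtLeast (δ : ℕ) (s : Finset ℕ) : Prop :=
  ∀ x ∈ s, ∀ y ∈ s, x < y → x + δ ≤ y

instance (δ : ℕ) : DecidablePred (HasGapsAtLeast δ) := fun s => by
  unfold HasGapsAtLeast; infer_instance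

lemma hasGapsAtLeast_insert_of_forall_lt {δ x : ℕ} {s : Finset ℕ} (hs : ∀ y ∈ s, y < x) :
    HasGapsAtLeast δ (insert x s) ↔ HasGapsAtLeast δ s ∧ ∀ y ∈ s, y + δ ≤ x := by
  refine ⟨fun h => ⟨fun a ha b hb => h a (mem_insert_of_mem ha) b (mem_insert_of_mem hb),
    fun y hy => h y (mem_insert_of_mem hy) x (mem_insert_self x s) (hs y hy)⟩, ?_⟩
  rintro ⟨hgap, hx⟩ a ha b hb hab
  rw [mem_insert] at ha hb
  rcases ha with rfl | ha
  · rcases hb with rfl | hb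
    · exact absurd hab (lt_irrefl _)
    · exact absurd (hs b hb) (not_lt.mpr hab.le)
  · rcases hb with rfl | hb
    · exact hx a ha
    · exact hgap a ha b hb hab

def gappedSubsets (δ a n k : ℕ) : Finset (Finset ℕ) :=
  ((Ico a (a + n)).powersetCard k).filter (HasGapsAtLeast δ)

lemma mem_gappedSubsets {δ a n k : ℕ} {s : Finset ℕ} :
    s ∈ gappedSubsets δ a n k ↔
      #s = k ∧ (∀ x ∈ s, a ≤ x ∧ x < a + n) ∧ HasGapsAtLeast δ s := by
  simp only [gappedSubsets, mem_filter, mem_powersetCard, subset_iff, mem_Ico]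
  tauto

lemma card_gappedSubsets_succ_succ (g a n k : ℕ) :
    #(gappedSubsets (g + 1) a (n + 1) (k + 1)) =
      #(gappedSubsets (g + 1) a n (k + 1)) + #(gappedSubsets (g + 1) a (n - g) k) := by
  have hnotMem : a + n ∉ Ico a (a + n) := by simp
  rw [gappedSubsets, ← add_assoc, Nat.Ico_succ_right_eq_insert_Ico (by omega),
    powersetCard_succ_insert hnotMem, filter_union, card_union_of_disjoint, filter_image]
  · have hfilter :
        {t ∈ powersetCard k (Ico a (a + n)) | HasGapsAtLeast (g + 1) (insert (a + n) t)} =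
          gappedSubsets (g + 1) a (n - g) k := by
      ext t
      simp only [mem_filter, mem_powersetCard, mem_gappedSubsets, subset_iff, mem_Ico]
      constructor
      · rintro ⟨⟨hsub, hcard⟩, hgap⟩
        rw [hasGapsAtLeast_insert_of_forall_lt fun y hy => (hsub hy).2] at hgap
        exact ⟨hcard, fun x hx => ⟨(hsub hx).1, by have := hgap.2 x hx; omega⟩, hgap.1⟩
      · rintro ⟨hcard, hrange, hgap⟩
        have hsub : ∀ x ∈ t, a ≤ x ∧ x < a + n := fun x hx => by have := hrange x hx; omega
        refine ⟨⟨hsub, hcard⟩, ?_⟩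
        rw [hasGapsAtLeast_insert_of_forall_lt fun y hy => (hsub y hy).2]
        exact ⟨hgap, fun y hy => by have := hrange y hy; omega⟩
    have hinj :
        Set.InjOn (insert (a + n)) (gappedSubsets (g + 1) a (n - g) k : Set (Finset ℕ)) := by
      intro s hs t ht hst
      have hsn : a + n ∉ s := fun h => by have := (mem_gappedSubsets.mp hs).2.1 _ h; omega
      have htn : a + n ∉ t := fun h => by have := (mem_gappedSubsets.mp ht).2.1 _ h; omega
      simpa [erase_insert hsn, erase_insert htn] using congrArg (erase · (a + n)) hst
    rw [hfilter, card_image_of_injOn hinj]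
    rfl
  · refine disjoint_filter_filter (disjoint_left.mpr fun s hs hs' => ?_)
    obtain ⟨t, -, rfl⟩ := mem_image.mp hs'
    exact hnotMem ((mem_powersetCard.mp hs).1 (mem_insert_self _ t))

lemma choose_succ_sub_mul (n k g : ℕ) :
    (n + 1 - k * g).choose (k + 1) =
      (n - k * g).choose (k + 1) + (n - g - (k - 1) * g).choose k := by
  rcases k with _ | k
  · simp [Nat.choose_one_right]
  have hsub : n - g - (k + 1 - 1) * g = n - (k + 1) * g := by
    rw [Nat.sub_sub]; congr 1; simp [add_mul, add_comm]
  rw [hsub]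
  by_cases h : (k + 1) * g ≤ n
  · rw [show n + 1 - (k + 1) * g = n - (k + 1) * g + 1 by omega, Nat.choose_succ_succ', add_comm]
  · rw [show n + 1 - (k + 1) * g = 0 by omega, show n - (k + 1) * g = 0 by omega]
    simp

-- The truncated subtractions are harmless: `k = 0` gives `C(n, 0) = 1`, and if `n < (k - 1) g`
-- there is no such subset and `C(0, k) = 0`.
theorem card_gappedSubsets (g a : ℕ) :
    ∀ n k, #(gappedSubsets (g + 1) a n k) = (n - (k - 1) * g).choose k
  | 0, k => by cases k <;> simp [gappedSubsets, HasGapsAtLeast, filter_singleton]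
  | n + 1, 0 => by simp [gappedSubsets, HasGapsAtLeast, filter_singleton]
  | n + 1, k + 1 => by
    rw [card_gappedSubsets_succ_succ, card_gappedSubsets g a n, card_gappedSubsets g a (n - g),
      add_tsub_cancel_right, choose_succ_sub_mul]

section ZipperGraph

variable {G : SimpleGraph ℕ} {δ m : ℕ}

lemma adj_iff_of_le
    (hG : ∀ i j : ℕ, G.Adj i j ↔
      (δ : ℤ) ≤ |(i : ℤ) - (j : ℤ)| ∧ |(i : ℤ) - (j : ℤ)| ≤ (δ : ℤ) + m - 1)
    {i j : ℕ} (hij : i ≤ j) : G.Adj i j ↔ i + δ ≤ j ∧ j < i + δ + m := by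
  rw [hG, abs_sub_comm, abs_of_nonneg (by omega)]
  omega

lemma setOf_isNClique_min_eq_image
    (hG : ∀ i j : ℕ, G.Adj i j ↔
      (δ : ℤ) ≤ |(i : ℤ) - (j : ℤ)| ∧ |(i : ℤ) - (j : ℤ)| ≤ (δ : ℤ) + m - 1)
    (hδ : 1 ≤ δ) (v k : ℕ) :
    {s : Finset ℕ | G.IsNClique (k + 1) s ∧ v ∈ s ∧ ∀ u ∈ s, v ≤ u} =
      insert v '' (gappedSubsets δ (v + δ) m k : Set (Finset ℕ)) := by
  ext s
  simp only [Set.mem_ofPred_eq, Set.mem_image, mem_coe, mem_gappedSubsets]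
  constructor
  · rintro ⟨hclique, hv, hmin⟩
    have hadj {x y : ℕ} (hx : x ∈ s) (hy : y ∈ s) (hxy : x < y) :
        x + δ ≤ y ∧ y < x + δ + m :=
      (adj_iff_of_le hG hxy.le).mp (hclique.isClique hx hy hxy.ne)
    refine ⟨s.erase v, ⟨?_, fun x hx => ?_, fun x hx y hy hxy => ?_⟩, insert_erase hv⟩
    · rw [card_erase_of_mem hv, hclique.card_eq, add_tsub_cancel_right]
    · have hvx : v < x :=
        lt_of_le_of_ne (hmin x (mem_of_mem_erase hx)) (ne_of_mem_erase hx).symm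
      have := hadj hv (mem_of_mem_erase hx) hvx
      omega
    · exact (hadj (mem_of_mem_erase hx) (mem_of_mem_erase hy) hxy).1
  · rintro ⟨s, ⟨hcard, hrange, hgap⟩, rfl⟩
    have hvs : v ∉ s := fun h => by have := (hrange v h).1; omega
    refine ⟨⟨?_, ?_⟩, mem_insert_self v s, ?_⟩
    · rw [coe_insert, SimpleGraph.isClique_insert]
      refine ⟨fun x hx y hy hne => ?_, fun x hx _ => ?_⟩
      · have hadj {a b : ℕ} (ha : a ∈ s) (hb : b ∈ s) (hab : a < b) : G.Adj a b := by
          have := hrange a ha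
          have := hrange b hb
          exact (adj_iff_of_le hG hab.le).mpr ⟨hgap a ha b hb hab, by omega⟩
        rcases lt_or_gt_of_ne hne with h | h
        · exact hadj hx hy h
        · exact (hadj hy hx h).symm
      · have := hrange x hx
        exact (adj_iff_of_le hG (by omega)).mpr (by omega)
    · rw [card_insert_of_notMem hvs, hcard]
    · intro u hu
      rcases mem_insert.mp hu with rfl | hu
      · exact le_rfl
      · have := hrange u hu; omega

lemma ncard_setOf_isNClique_min
    (hG : ∀ i j : ℕ, G.Adj i j ↔
      (δ : ℤ) ≤ |(i : ℤ) - (j : ℤ)| ∧ |(i : ℤ) - (j : ℤ)| ≤ (δ : ℤ) + m - 1)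
    (hδ : 1 ≤ δ) (v k : ℕ) :
    {s : Finset ℕ | G.IsNClique (k + 1) s ∧ v ∈ s ∧ ∀ u ∈ s, v ≤ u}.ncard =
      #(gappedSubsets δ (v + δ) m k) := by
  have hinj : Set.InjOn (insert v) (gappedSubsets δ (v + δ) m k : Set (Finset ℕ)) := by
    intro s hs t ht hst
    have hsv : v ∉ s := fun h => by have := ((mem_gappedSubsets.mp hs).2.1 _ h).1; omega
    have htv : v ∉ t := fun h => by have := ((mem_gappedSubsets.mp ht).2.1 _ h).1; omega
    simpa [erase_insert hsv, erase_insert htv] using congrArg (erase · v) hst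
  rw [setOf_isNClique_min_eq_image hG hδ, hinj.ncard_image, Set.ncard_coe_finset]

end ZipperGraph

theorem stmt_5_general (m t δ v : ℕ) (hδ : 1 ≤ δ)
    (G : SimpleGraph ℕ)
    (hG : ∀ i j : ℕ, G.Adj i j ↔
      (δ : ℤ) ≤ |(i : ℤ) - (j : ℤ)| ∧ |(i : ℤ) - (j : ℤ)| ≤ (δ : ℤ) + m - 1) :
    {s : Finset ℕ | G.IsNClique (t + 2) s ∧ v ∈ s ∧ ∀ u ∈ s, v ≤ u}.ncard =
      {s : Finset ℕ | s.card = t + 1 ∧ (∀ x ∈ s, v + δ ≤ x ∧ x ≤ v + δ + m - 1) ∧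
        ∀ x ∈ s, ∀ y ∈ s, x < y → x + δ ≤ y}.ncard ∧
    {s : Finset ℕ | s.card = t + 1 ∧ (∀ x ∈ s, v + δ ≤ x ∧ x ≤ v + δ + m - 1) ∧
        ∀ x ∈ s, ∀ y ∈ s, x < y → x + δ ≤ y}.ncard =
      (if t + 1 ≤ m - t * δ + t then Nat.choose (m - t * δ + t) (t + 1) else 0) := by
  have hgapped :
      {s : Finset ℕ | s.card = t + 1 ∧ (∀ x ∈ s, v + δ ≤ x ∧ x ≤ v + δ + m - 1) ∧
        ∀ x ∈ s, ∀ y ∈ s, x < y → x + δ ≤ y} =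
        (gappedSubsets δ (v + δ) m (t + 1) : Set _) := by
    ext s
    simp only [Set.mem_ofPred_eq, mem_coe, mem_gappedSubsets, HasGapsAtLeast]
    refine and_congr_right fun _ => and_congr_left fun _ => forall₂_congr fun x _ => ?_
    omega
  rw [hgapped, Set.ncard_coe_finset, ncard_setOf_isNClique_min hG hδ]
  obtain ⟨g, rfl⟩ : ∃ g, δ = g + 1 := ⟨δ - 1, by omega⟩
  refine ⟨rfl, ?_⟩
  rw [card_gappedSubsets, add_tsub_cancel_right, mul_add_one]
  split_ifs with h
  · congr 1
    omega
  · exact Nat.choose_eq_zero_of_lt (by omega)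

theorem stmt_5 (m t δ v : ℕ) (hm : 1 ≤ m) (ht : 1 ≤ t) (hδ : 1 ≤ δ)
    (G : SimpleGraph ℕ)
    (hG : ∀ i j : ℕ, G.Adj i j ↔
      (δ : ℤ) ≤ |(i : ℤ) - (j : ℤ)| ∧ |(i : ℤ) - (j : ℤ)| ≤ (δ : ℤ) + m - 1) :
    {s : Finset ℕ | G.IsNClique (t + 2) s ∧ v ∈ s ∧ ∀ u ∈ s, v ≤ u}.ncard =
      {s : Finset ℕ | s.card = t + 1 ∧ (∀ x ∈ s, v + δ ≤ x ∧ x ≤ v + δ + m - 1) ∧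
        ∀ x ∈ s, ∀ y ∈ s, x < y → x + δ ≤ y}.ncard ∧
    {s : Finset ℕ | s.card = t + 1 ∧ (∀ x ∈ s, v + δ ≤ x ∧ x ≤ v + δ + m - 1) ∧
        ∀ x ∈ s, ∀ y ∈ s, x < y → x + δ ≤ y}.ncard =
      (if t + 1 ≤ m - t * δ + t then Nat.choose (m - t * δ + t) (t + 1) else 0) :=
  stmt_5_general m t δ v hδ G hG
end

section
/- The tiled diagonal interleaver map φ(wq + i, ws + j) = (w(q - s - 1) + j, w(L + s) + i), for q ∈ ℕ, s ∈ [L], i, j ∈ [w], is a bijection from the set of virtual positions {(a, b) : a ∈ ℕ, b ∈ [Lw]} onto the set of real positions with row index possibly negative {(a, b) : a ∈ ℤ, b ∈ [Lw, 2Lw)}, restricted appropriately; in particular it is injective and strictly causal (the image row index w(q-s-1)+j is strictly less than the source row index wq+i). -/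
private lemma aux_div (w q r : ℤ) (hw : 0 < w) (h0 : 0 ≤ r) (h1 : r < w) :
    (w * q + r) / w = q := by
  rw [add_comm, Int.add_mul_ediv_left _ _ hw.ne', Int.ediv_eq_zero_of_lt h0 h1, zero_add]

private lemma aux_mod (w q r : ℤ) (hw : 0 < w) (h0 : 0 ≤ r) (h1 : r < w) :
    (w * q + r) % w = r := by
  rw [add_comm, mul_comm, Int.add_mul_emod_self_right, Int.emod_eq_of_lt h0 h1]

/-- Tiled diagonal interleaver map, with row arithmetic in ℤ (rows with negative index
are all-zero).  A position `(a, b)` with `b = w*s + j`, `a = w*q + i` (`i, j ∈ [w]`,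
`s ∈ [L]` for virtual positions) is mapped to `(w*(q - s - 1) + j, w*(L + s) + i)`. -/
theorem stmt_9 (w L : ℕ) (hw : 1 ≤ w) (hL : 1 ≤ L)
    (φ : ℤ × ℤ → ℤ × ℤ)
    (hφ : ∀ p : ℤ × ℤ, φ p =
      ((w : ℤ) * (p.1 / (w : ℤ) - p.2 / (w : ℤ) - 1) + p.2 % (w : ℤ),
       (w : ℤ) * ((L : ℤ) + p.2 / (w : ℤ)) + p.1 % (w : ℤ))) :
    Set.BijOn φ {p : ℤ × ℤ | 0 ≤ p.2 ∧ p.2 < (L : ℤ) * w}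
      {p : ℤ × ℤ | (L : ℤ) * w ≤ p.2 ∧ p.2 < 2 * L * w} ∧
    ∀ p : ℤ × ℤ, 0 ≤ p.2 → p.2 < (L : ℤ) * w → (φ p).1 < p.1 := by
  have hw' : (0 : ℤ) < (w : ℤ) := by exact_mod_cast hw
  set W : ℤ := (w : ℤ) with hW
  set ψ : ℤ × ℤ → ℤ × ℤ :=
    fun q => (W * (q.1 / W + q.2 / W - L + 1) + q.2 % W, W * (q.2 / W - L) + q.1 % W)
    with hψ
  have hmod0 : ∀ a : ℤ, 0 ≤ a % W := fun a => Int.emod_nonneg a hw'.ne'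
  have hmodlt : ∀ a : ℤ, a % W < W := fun a => Int.emod_lt_of_pos a hw'
  have hmaps : Set.MapsTo φ {p : ℤ × ℤ | 0 ≤ p.2 ∧ p.2 < (L : ℤ) * w}
      {p : ℤ × ℤ | (L : ℤ) * w ≤ p.2 ∧ p.2 < 2 * L * w} := by
    rintro ⟨a, b⟩ ⟨hb0, hb1⟩
    rw [Set.mem_setOf_eq, hφ]
    have h1 : 0 ≤ b / W := Int.ediv_nonneg hb0 hw'.le
    have h2 : b / W < (L : ℤ) := (Int.ediv_lt_iff_lt_mul hw').mpr hb1
    have h3 := hmod0 a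
    have h4 := hmodlt a
    constructor <;> simp only <;> nlinarith
  have hmaps' : Set.MapsTo ψ {p : ℤ × ℤ | (L : ℤ) * w ≤ p.2 ∧ p.2 < 2 * L * w}
      {p : ℤ × ℤ | 0 ≤ p.2 ∧ p.2 < (L : ℤ) * w} := by
    rintro ⟨c, d⟩ ⟨hd0, hd1⟩
    rw [Set.mem_setOf_eq, hψ]
    have h1 : (L : ℤ) ≤ d / W := (Int.le_ediv_iff_mul_le hw').mpr hd0
    have h2 : d / W < 2 * (L : ℤ) := (Int.ediv_lt_iff_lt_mul hw').mpr (by linarith)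
    have h3 := hmod0 c
    have h4 := hmodlt c
    constructor <;> simp only <;> nlinarith
  have hinv : Set.InvOn ψ φ {p : ℤ × ℤ | 0 ≤ p.2 ∧ p.2 < (L : ℤ) * w}
      {p : ℤ × ℤ | (L : ℤ) * w ≤ p.2 ∧ p.2 < 2 * L * w} := by
    constructor
    · rintro ⟨a, b⟩ _
      rw [hφ]
      simp only [hψ]
      rw [aux_div W _ _ hw' (hmod0 b) (hmodlt b), aux_mod W _ _ hw' (hmod0 b) (hmodlt b),
        aux_div W _ _ hw' (hmod0 a) (hmodlt a), aux_mod W _ _ hw' (hmod0 a) (hmodlt a)]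
      have ha := Int.mul_ediv_add_emod a W
      have hb := Int.mul_ediv_add_emod b W
      ext <;> simp only <;> ring_nf <;> ring_nf at ha hb <;> linarith
    · rintro ⟨c, d⟩ _
      rw [hφ]
      simp only [hψ]
      rw [aux_div W _ _ hw' (hmod0 d) (hmodlt d), aux_mod W _ _ hw' (hmod0 d) (hmodlt d),
        aux_div W _ _ hw' (hmod0 c) (hmodlt c), aux_mod W _ _ hw' (hmod0 c) (hmodlt c)]
      have hc := Int.mul_ediv_add_emod c W
      have hd := Int.mul_ediv_add_emod d W
      ext <;> simp only <;> ring_nf <;> ring_nf at hc hd <;> linarith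
  refine ⟨hinv.bijOn hmaps hmaps', ?_⟩
  rintro ⟨a, b⟩ hb0 hb1
  rw [hφ]
  simp only
  have h1 : 0 ≤ b / W := Int.ediv_nonneg hb0 hw'.le
  have h2 := hmod0 a
  have h3 := hmodlt b
  have ha := Int.mul_ediv_add_emod a W
  nlinarith
end
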